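/- Let d ≥ 3, let c ≠ 0 be a real constant, and let Ω be an open subset of ℝ^d (EuclideanSpace ℝ (Fin d)) containing the origin. Define û(x) = c · ‖x‖^(2-d) for x ≠ 0. Then the function x ↦ ‖∇û(x)‖² (equivalently x ↦ ‖fderiv ℝ û x‖²) is not Lebesgue-integrable on Ω; consequently û does not belong to H¹(Ω). -/

import Mathlib

open MeasureTheory Real

/-!
Away from the origin `‖∇(c‖x‖^p)‖² = (c p)² ‖x‖^(2(p-1))`. In polar coordinates the integral of
`‖x‖^s` over a ball `B(0, r)` in dimension `d` is a multiple of `∫₀ʳ t^(d-1+s) dt`, which is finite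
iff `s > -d`; for `p = 2 - d` the exponent `2(p-1) = 2 - 2d` is `≤ -d`.
-/

section NormRpow

variable {E : Type*} [NormedAddCommGroup E] [InnerProductSpace ℝ E]

theorem hasFDerivAt_norm_rpow_of_ne_zero {x : E} (hx : x ≠ 0) (p : ℝ) :
    HasFDerivAt (fun y : E ↦ ‖y‖ ^ p) ((p * ‖x‖ ^ (p - 2)) • innerSL ℝ x) x := by
  apply HasStrictFDerivAt.hasFDerivAt
  convert (hasStrictFDerivAt_norm_sq x).rpow_const (p := p / 2) (by simp [hx]) using 0
  simp_rw [← rpow_natCast_mul (norm_nonneg _), ← Nat.cast_smul_eq_nsmul ℝ, smul_smul]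
  ring_nf

theorem norm_fderiv_const_mul_norm_rpow {x : E} (hx : x ≠ 0) (c p : ℝ) :
    ‖fderiv ℝ (fun y : E ↦ c * ‖y‖ ^ p) x‖ = |c * p| * ‖x‖ ^ (p - 1) := by
  have hx' : ‖x‖ ≠ 0 := norm_ne_zero_iff.mpr hx
  rw [((hasFDerivAt_norm_rpow_of_ne_zero hx p).const_mul c).fderiv, norm_smul, norm_smul,
    innerSL_apply_norm, Real.norm_eq_abs, Real.norm_eq_abs, abs_mul p,
    abs_of_nonneg (rpow_nonneg (norm_nonneg x) _), abs_mul, mul_assoc |p|,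
    ← rpow_add_one hx', mul_assoc]
  ring_nf

theorem sq_norm_fderiv_const_mul_norm_rpow {x : E} (hx : x ≠ 0) (c p : ℝ) :
    ‖fderiv ℝ (fun y : E ↦ c * ‖y‖ ^ p) x‖ ^ 2 = (c * p) ^ 2 * ‖x‖ ^ (2 * (p - 1)) := by
  rw [norm_fderiv_const_mul_norm_rpow hx, mul_pow, sq_abs, mul_comm 2 (p - 1),
    rpow_mul (norm_nonneg x), rpow_two]

end NormRpow

section IntegrableNormRpow

variable {E : Type*} [NormedAddCommGroup E] [NormedSpace ℝ E] [FiniteDimensional ℝ E]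
  [Nontrivial E] [MeasurableSpace E] [BorelSpace E] {μ : Measure E} [μ.IsAddHaarMeasure]

open Metric in
theorem integrableOn_ball_norm_rpow_iff {r : ℝ} (hr : 0 < r) (s : ℝ) :
    IntegrableOn (fun x : E ↦ ‖x‖ ^ s) (ball 0 r) μ ↔ -(Module.finrank ℝ E : ℝ) < s := by
  have hd : 1 ≤ Module.finrank ℝ E := Module.finrank_pos
  rw [integrableOn_fun_norm_addHaar μ (f := fun y ↦ y ^ s),
    integrableOn_congr_fun (g := fun y : ℝ ↦ y ^ ((Module.finrank ℝ E - 1 : ℕ) + s)) _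
      measurableSet_Ioo, intervalIntegral.integrableOn_Ioo_rpow_iff hr, Nat.cast_sub hd]
  · constructor <;> intro h <;> push_cast at * <;> linarith
  · rintro y ⟨hy, -⟩
    simp only [smul_eq_mul, rpow_add hy, rpow_natCast]

theorem not_integrableOn_norm_rpow_of_mem_nhds {U : Set E} (hU : U ∈ nhds 0) {s : ℝ}
    (hs : s ≤ -(Module.finrank ℝ E : ℝ)) :
    ¬ IntegrableOn (fun x : E ↦ ‖x‖ ^ s) U μ := by
  intro h
  obtain ⟨r, hr, hball⟩ := Metric.mem_nhds_iff.mp hU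
  exact hs.not_gt ((integrableOn_ball_norm_rpow_iff hr s).mp (h.mono_set hball))

end IntegrableNormRpow

theorem not_integrableOn_sq_norm_fderiv_const_mul_norm_rpow {E : Type*} [NormedAddCommGroup E]
    [InnerProductSpace ℝ E] [FiniteDimensional ℝ E] [Nontrivial E] [MeasurableSpace E]
    [BorelSpace E] {μ : Measure E} [μ.IsAddHaarMeasure] {c p : ℝ} (hc : c ≠ 0) (hp : p ≠ 0)
    (hpd : 2 * (p - 1) ≤ -(Module.finrank ℝ E : ℝ)) {U : Set E} (hU : U ∈ nhds 0) :
    ¬ IntegrableOn (fun x ↦ ‖fderiv ℝ (fun y : E ↦ c * ‖y‖ ^ p) x‖ ^ 2) U μ := by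
  have hae : (fun x ↦ ‖fderiv ℝ (fun y : E ↦ c * ‖y‖ ^ p) x‖ ^ 2) =ᵐ[μ.restrict U]
      fun x ↦ (c * p) ^ 2 * ‖x‖ ^ (2 * (p - 1)) := by
    refine ae_restrict_of_ae ?_
    filter_upwards [compl_mem_ae_iff.mpr (measure_singleton (μ := μ) 0)] with x hx
    exact sq_norm_fderiv_const_mul_norm_rpow hx c p
  rw [integrableOn_congr_fun_ae hae, IntegrableOn,
    integrable_const_mul_iff (IsUnit.mk0 _ (by positivity))]
  exact not_integrableOn_norm_rpow_of_mem_nhds hU hpd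

/-- For `d ≥ 3` and `c ≠ 0`, the function `û(x) = c‖x‖^(2-d)` (the Green's function of the
Laplacian up to a constant) has a gradient whose squared norm is not Lebesgue-integrable on any
open set `Ω` containing the origin; consequently `û ∉ H¹(Ω)`. -/
theorem green_function_high_dim_not_in_H1
    (d : ℕ) (hd : 3 ≤ d) (c : ℝ) (hc : c ≠ 0)
    (Ω : Set (EuclideanSpace ℝ (Fin d))) (hΩ : IsOpen Ω)
    (h0 : (0 : EuclideanSpace ℝ (Fin d)) ∈ Ω) :
    ¬ IntegrableOn
      (fun x : EuclideanSpace ℝ (Fin d) =>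
        ‖fderiv ℝ (fun y : EuclideanSpace ℝ (Fin d) => c * ‖y‖ ^ ((2 : ℝ) - d)) x‖ ^ 2)
      Ω volume := by
  have hd' : (3 : ℝ) ≤ d := by exact_mod_cast hd
  have : Nontrivial (EuclideanSpace ℝ (Fin d)) := by
    have : Nonempty (Fin d) := ⟨⟨0, by omega⟩⟩
    infer_instance
  refine not_integrableOn_sq_norm_fderiv_const_mul_norm_rpow hc (by linarith) ?_
    (hΩ.mem_nhds h0)
  rw [finrank_euclideanSpace_fin]
  linarith
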